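/- Let (α, u) = (α, u₁, …, u_n) ∈ (0, ∞)^{n+1} be a positive solution of the discrete system (S), so that u_k = U_k(u₁) for 1 ≤ k ≤ n. If the function g := g₁/g₂ is strictly decreasing on (0, ∞), then J(α, u) is invertible and for all 1 ≤ i, j ≤ n its inverse satisfies (J(α, u)⁻¹)_{ij} = Σ_{k = max{i, j}}^{n−1} (U_i'(u₁)·U_j'(u₁))/(U_k'(u₁)·U_{k+1}'(u₁)) + (U_i'(u₁)·U_j'(u₁))/(U_n'(u₁)·det(J(α, u))), where U₁'(u₁) := 1. -/

import Mathlib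

/-!
Write `v k = U_k'(u₁)`, with the ghost value `v 0 = 0`. Differentiating the shooting recursion
shows that `v` solves the three-term recurrence `Γ_k v_k = v_{k-1} + v_{k+1}` of the first `n - 1`
rows of `J`. For a tridiagonal matrix with such a solution, multiplying on the right by the upper
triangular matrix `(v_i [i ≤ j])` gives a lower triangular matrix, so `det J = Γ_n v_n - v_{n-1}`;
and the discrete Green's function `v_i v_j c_{max i j}` with
`c_m = ∑_{m ≤ k < n} 1 / (v_k v_{k+1}) + 1 / (v_n det J)` is a right inverse of `J` as soon as `v`
has no zeros and `det J ≠ 0`.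

Convexity of `g₁` makes `u` and `v` positive and increasing, and gives by induction the discrete
Wronskian estimate `(v_{k+1} - v_k) g₁(u_{k+1}) < g₁'(u_{k+1}) v_{k+1} (u_{k+1} - u_k)`. At
`k = n - 1` it combines with the boundary equation and with `(g₁/g₂)'(u_n) ≤ 0` into `det J < 0`.
-/

open Finset

noncomputable def U (g1 : ℝ → ℝ) (h : ℝ) : ℕ → ℝ → ℝ
  | 0, u => u
  | 1, u => u
  | 2, u => u + h ^ 2 / 2 * g1 u
  | k + 3, u => 2 * U g1 h (k + 2) u - U g1 h (k + 1) u + h ^ 2 * g1 (U g1 h (k + 2) u)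

/-- `(α, u 1, …, u n)` is a positive solution of the discrete system (S). -/
def IsSolution (g1 g2 : ℝ → ℝ) (n : ℕ) (h α : ℝ) (u : ℕ → ℝ) : Prop :=
  (∀ k, 1 ≤ k → k ≤ n → 0 < u k) ∧
  u 2 - u 1 = h ^ 2 / 2 * g1 (u 1) ∧
  (∀ k, 2 ≤ k → k ≤ n - 1 → u (k + 1) - 2 * u k + u (k - 1) = h ^ 2 * g1 (u k)) ∧
  u n - u (n - 1) + h ^ 2 / 2 * g1 (u n) = h * α * g2 (u n)

/-- The Jacobian matrix `J(α, u)` of the discrete system (S). -/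
noncomputable def Jac (g1 g2 : ℝ → ℝ) (n : ℕ) (h α : ℝ) (u : ℕ → ℝ) :
    Matrix (Fin n) (Fin n) ℝ :=
  Matrix.of fun i j =>
    if i = j then
      (if (i : ℕ) = 0 then 1 + h ^ 2 / 2 * deriv g1 (u 1)
       else if (i : ℕ) = n - 1 then 1 + h ^ 2 / 2 * deriv g1 (u n) - h * α * deriv g2 (u n)
       else 2 + h ^ 2 * deriv g1 (u ((i : ℕ) + 1)))
    else if (i : ℕ) + 1 = (j : ℕ) ∨ (j : ℕ) + 1 = (i : ℕ) then -1 else 0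

section Tridiagonal

variable {K : Type*} [Field K]

def tridiag (Γ : ℕ → K) (n : ℕ) : Matrix (Fin n) (Fin n) K :=
  Matrix.of fun i j =>
    if i = j then Γ (i + 1) else if (i : ℕ) + 1 = j ∨ (j : ℕ) + 1 = i then -1 else 0

lemma sum_fin_ite_val_eq (n c : ℕ) (x : K) :
    ∑ l : Fin n, (if (l : ℕ) = c then x else 0) = if c < n then x else 0 := by
  rw [Fin.sum_univ_eq_sum_range (fun l => if l = c then x else 0), sum_ite_eq']
  simp only [mem_range]

lemma tridiag_mul_apply (Γ : ℕ → K) {n : ℕ} (F : ℕ → ℕ → K) (hF : ∀ s, F 0 s = 0)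
    (i j : Fin n) :
    (tridiag Γ n * Matrix.of fun a b : Fin n => F (a + 1) (b + 1)) i j =
      Γ (i + 1) * F (i + 1) (j + 1) - F i (j + 1) -
        if (i : ℕ) + 1 < n then F (i + 2) (j + 1) else 0 := by
  have hrow : ∀ l : Fin n, tridiag Γ n i l * F (l + 1) (j + 1) =
      (if (l : ℕ) = i then Γ (i + 1) * F (i + 1) (j + 1) else 0) -
        (if (l : ℕ) = i - 1 then F i (j + 1) else 0) -
        (if (l : ℕ) = i + 1 then F (i + 2) (j + 1) else 0) := by
    intro l
    simp only [tridiag, Matrix.of_apply, Fin.ext_iff]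
    generalize (i : ℕ) = a
    generalize (l : ℕ) = b
    rcases a with _ | a <;> split_ifs <;> subst_vars <;>
      first | omega | (simp at *; omega) | simp [hF]
  rw [Matrix.mul_apply]
  simp only [Matrix.of_apply, hrow, sum_sub_distrib, sum_fin_ite_val_eq]
  rw [if_pos i.isLt, if_pos (by omega)]

lemma det_tridiag (Γ v : ℕ → K) {n : ℕ} (hn : 0 < n) (hv0 : v 0 = 0) (hv1 : v 1 = 1)
    (hv : ∀ k, 2 ≤ k → k ≤ n → v k ≠ 0)
    (hrec : ∀ k, 1 ≤ k → k < n → Γ k * v k = v (k - 1) + v (k + 1)) :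
    (tridiag Γ n).det = Γ n * v n - v (n - 1) := by
  obtain ⟨m, rfl⟩ : ∃ m, n = m + 1 := ⟨n - 1, by omega⟩
  rw [Nat.add_sub_cancel]
  set T : Matrix (Fin (m + 1)) (Fin (m + 1)) K :=
    Matrix.of fun a b => if (a : ℕ) + 1 ≤ (b : ℕ) + 1 then v (a + 1) else 0
  have hJT := tridiag_mul_apply Γ (n := m + 1) (fun r s => if r ≤ s then v r else 0) (by simp [hv0])
  beta_reduce at hJT
  have hT : T.det = ∏ i : Fin (m + 1), v (i + 1) := by
    have hTtri : T.BlockTriangular id := fun a b (hba : b < a) => by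
      simp [T, not_le.mpr hba]
    rw [Matrix.det_of_isUpperTriangular hTtri]
    simp [T]
  have hJTdet : (tridiag Γ (m + 1) * T).det = ∏ i : Fin (m + 1), (Γ (i + 1) * v (i + 1) - v i) := by
    rw [Matrix.det_of_isLowerTriangular _ fun a b hab => ?_]
    · refine prod_congr rfl fun i _ => ?_
      rw [hJT]
      simp
    · have hab : (a : ℕ) < b := hab
      rw [hJT, if_pos (by omega), if_pos (by omega), if_pos (by omega), if_pos (by omega),
        hrec (a + 1) (by omega) (by omega)]
      simp
  have hvprod : ∏ i : Fin (m + 1), v (i + 1) = ∏ i : Fin m, v (i + 2) := by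
    simp [Fin.prod_univ_succ, hv1]
  have hdiagprod : ∏ i : Fin (m + 1), (Γ (i + 1) * v (i + 1) - v i) =
      (∏ i : Fin m, v (i + 2)) * (Γ (m + 1) * v (m + 1) - v m) := by
    rw [Fin.prod_univ_castSucc]
    congr 1
    refine prod_congr rfl fun i _ => ?_
    have := hrec (i + 1) (by omega) (by omega)
    simp only [Fin.val_castSucc, Nat.add_sub_cancel] at this ⊢
    linear_combination this
  have hP : ∏ i : Fin m, v (i + 2) ≠ 0 := prod_ne_zero_iff.2 fun i _ => hv _ (by omega) (by omega)
  have hprod := Matrix.det_mul (tridiag Γ (m + 1)) T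
  rw [hJTdet, hT, hdiagprod, hvprod] at hprod
  exact mul_left_cancel₀ hP (by linear_combination -hprod)

def green (v c : ℕ → K) (n : ℕ) : Matrix (Fin n) (Fin n) K :=
  Matrix.of fun i j => v (i + 1) * v (j + 1) * c (max ((i : ℕ) + 1) ((j : ℕ) + 1))

lemma tridiag_mul_green (Γ v c : ℕ → K) {n : ℕ} (hv0 : v 0 = 0)
    (hrec : ∀ k, 1 ≤ k → k < n → Γ k * v k = v (k - 1) + v (k + 1))
    (hc : ∀ k, 1 ≤ k → k < n → v k * v (k + 1) * (c k - c (k + 1)) = 1)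
    (hcn : v n * (Γ n * v n - v (n - 1)) * c n = 1) :
    tridiag Γ n * green v c n = 1 := by
  ext i j
  have hrow := tridiag_mul_apply Γ (fun r s => v r * v s * c (max r s)) (by simp [hv0]) i j
  rw [green, hrow, Matrix.one_apply]
  simp only [Fin.ext_iff]
  have hi := i.isLt
  have hj := j.isLt
  generalize (i : ℕ) = a at *
  generalize (j : ℕ) = b at *
  have hreca : 1 ≤ a + 1 → a + 1 < n → Γ (a + 1) * v (a + 1) = v a + v (a + 2) := by
    simpa using hrec (a + 1)
  rcases lt_trichotomy a b with hab | rfl | hab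
  · rw [if_neg hab.ne, if_pos (by omega), max_eq_right (by omega), max_eq_right (by omega),
      max_eq_right (by omega)]
    linear_combination v (b + 1) * c (b + 1) * hreca (by omega) (by omega)
  · rw [if_pos rfl, max_self, max_eq_right (by omega)]
    split_ifs with han
    · rw [max_eq_left (by omega)]
      linear_combination v (a + 1) * c (a + 1) * hreca (by omega) han + hc (a + 1) (by omega) han
    · obtain rfl : n = a + 1 := by omega
      rw [Nat.add_sub_cancel] at hcn
      linear_combination hcn
  · have hva : v (a + 1) ≠ 0 :=
      right_ne_zero_of_mul (left_ne_zero_of_mul_eq_one (hc a (by omega) hi))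
    rw [if_neg hab.ne', max_eq_left (by omega), max_eq_left (by omega)]
    refine mul_left_cancel₀ hva ?_
    split_ifs with han
    · rw [max_eq_left (by omega)]
      linear_combination v (b + 1) * c (a + 1) * v (a + 1) * hreca (by omega) han
        - v (b + 1) * hc a (by omega) hi + v (b + 1) * hc (a + 1) (by omega) han
    · obtain rfl : n = a + 1 := by omega
      rw [Nat.add_sub_cancel] at hcn
      linear_combination v (b + 1) * hcn - v (b + 1) * hc a (by omega) hi

lemma inv_tridiag (Γ v : ℕ → K) {n : ℕ} (hn : 0 < n) (hv0 : v 0 = 0) (hv1 : v 1 = 1)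
    (hv : ∀ k, 1 ≤ k → k ≤ n → v k ≠ 0)
    (hrec : ∀ k, 1 ≤ k → k < n → Γ k * v k = v (k - 1) + v (k + 1))
    (hdet : (tridiag Γ n).det ≠ 0) :
    (tridiag Γ n)⁻¹ = green v (fun m => ∑ k ∈ Icc m (n - 1), 1 / (v k * v (k + 1)) +
      1 / (v n * (tridiag Γ n).det)) n := by
  refine Matrix.inv_eq_right_inv (tridiag_mul_green Γ v _ hv0 hrec (fun k hk hkn => ?_) ?_)
  · rw [Icc_eq_cons_Ioc (by omega), sum_cons, ← Icc_add_one_left_eq_Ioc]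
    have := hv k hk hkn.le
    have := hv (k + 1) (by omega) hkn
    field_simp
    ring
  · rw [← det_tridiag Γ v hn hv0 hv1 (fun k hk => hv k (by omega)) hrec,
      Icc_eq_empty (by omega), sum_empty, zero_add]
    have := hv n hn le_rfl
    field_simp

end Tridiagonal

section RealAnalysis

lemma pos_of_deriv_pos {f : ℝ → ℝ} (hf : Differentiable ℝ f) (hf0 : f 0 = 0)
    (hf' : ∀ x > 0, 0 < deriv f x) {x : ℝ} (hx : 0 < x) : 0 < f x := by
  have hmono : StrictMonoOn f (Set.Ici 0) :=
    strictMonoOn_of_deriv_pos (convex_Ici 0) hf.continuous.continuousOn (by simpa using hf')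
  simpa [hf0] using hmono Set.self_mem_Ici hx.le hx

lemma strictMonoOn_deriv_of_iteratedDeriv_two_pos {f : ℝ → ℝ} (hf : ContDiff ℝ 2 f)
    (hf'' : ∀ x > 0, 0 < iteratedDeriv 2 f x) : StrictMonoOn (deriv f) (Set.Ioi 0) := by
  refine strictMonoOn_of_deriv_pos (convex_Ioi 0)
    (hf.continuous_deriv one_le_two).continuousOn fun x hx => ?_
  rw [interior_Ioi] at hx
  simpa [iteratedDeriv_succ, iteratedDeriv_one] using hf'' x hx

lemma deriv_mul_le_mul_deriv_of_antitoneOn_div {f g : ℝ → ℝ} {s : Set ℝ} (hs : IsOpen s)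
    (hfg : AntitoneOn (fun x => f x / g x) s) {x : ℝ} (hx : x ∈ s)
    (hf : DifferentiableAt ℝ f x) (hg : DifferentiableAt ℝ g x) (hgx : g x ≠ 0) :
    deriv f x * g x ≤ f x * deriv g x := by
  have hderiv := hfg.derivWithin_nonpos (x := x)
  rw [derivWithin_of_isOpen hs hx, deriv_fun_div hf hg hgx,
    div_le_iff₀ (by positivity), zero_mul] at hderiv
  linarith

/-- The induction step of the discrete Wronskian estimate: `a, b` stand for `u k, u (k + 1)` and
`p, q` for `U_k'(u₁), U_{k+1}'(u₁)`. -/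
lemma wronskian_step {f : ℝ → ℝ} (hf : Differentiable ℝ f)
    (hf' : StrictMonoOn (deriv f) (Set.Ioi 0)) {a b p q : ℝ} (ha : 0 < a) (hab : a < b)
    (hp : 0 < p) (hpq : p ≤ q) (hR : (q - p) * f a ≤ deriv f a * p * (b - a)) :
    (q - p) * f b < deriv f b * q * (b - a) := by
  have hconv : ConvexOn ℝ (Set.Ioi 0) f :=
    (StrictMonoOn.strictConvexOn_of_deriv (convex_Ioi 0) hf.continuous.continuousOn
      (by rwa [interior_Ioi])).convexOn
  have hslope := hconv.slope_le_deriv ha (ha.trans hab) hab (hf b)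
  rw [slope_def_field, div_le_iff₀ (by linarith)] at hslope
  have hderiv : deriv f a < deriv f b := hf' ha (ha.trans hab) hab
  nlinarith [mul_le_mul_of_nonneg_left hslope (sub_nonneg.2 hpq),
    mul_lt_mul_of_pos_right hderiv (mul_pos hp (sub_pos.2 hab))]

lemma pos_lt_succ_of_increments_mono (x : ℕ → ℝ) {m : ℕ} (h1 : 0 < x 1) (h12 : x 1 < x 2)
    (hstep : ∀ k, 2 ≤ k → k ≤ m → 0 < x k → x k - x (k - 1) ≤ x (k + 1) - x k) :
    ∀ k, 1 ≤ k → k ≤ m → 0 < x k ∧ x k < x (k + 1) := by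
  intro k hk
  induction k, hk using Nat.le_induction with
  | base => exact fun _ => ⟨h1, h12⟩
  | succ k hk ih =>
    intro hkm
    obtain ⟨hpos, hlt⟩ := ih (by omega)
    have hinc := hstep (k + 1) (by omega) hkm (hpos.trans hlt)
    rw [Nat.add_sub_cancel] at hinc
    exact ⟨hpos.trans hlt, by linarith⟩

end RealAnalysis

section DiscreteSystem

/-- `dU g1 h k x = U_k'(x)`, with the ghost value `U_0' := 0`, which makes the first row of the
Jacobian an instance of the same three-term recurrence as the others. -/
noncomputable def dU (g1 : ℝ → ℝ) (h : ℝ) : ℕ → ℝ → ℝ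
  | 0, _ => 0
  | 1, _ => 1
  | 2, x => 1 + h ^ 2 / 2 * deriv g1 x
  | k + 3, x => 2 * dU g1 h (k + 2) x - dU g1 h (k + 1) x +
      h ^ 2 * deriv g1 (U g1 h (k + 2) x) * dU g1 h (k + 2) x

variable {g1 g2 : ℝ → ℝ} {n : ℕ} {h α : ℝ} {u : ℕ → ℝ}

lemma hasDerivAt_U (hg1 : Differentiable ℝ g1) (h x : ℝ) {k : ℕ} (hk : 1 ≤ k) :
    HasDerivAt (U g1 h k) (dU g1 h k x) x := by
  induction k using Nat.strong_induction_on with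
  | _ k ih =>
    match k, hk with
    | 1, _ => simpa [U, dU] using hasDerivAt_id' x
    | 2, _ =>
      simpa [U, dU] using (hasDerivAt_id' x).fun_add ((hg1 x).hasDerivAt.const_mul (h ^ 2 / 2))
    | k + 3, _ =>
      have h2 := ih (k + 2) (by omega) (by omega)
      have h1 := ih (k + 1) (by omega) (by omega)
      exact (((h2.const_mul 2).fun_sub h1).fun_add
        (((hg1 _).hasDerivAt.comp x h2).const_mul (h ^ 2))).congr_deriv (by rw [← mul_assoc]; rfl)

lemma dU_succ_of_eq_U (hU : ∀ k, 1 ≤ k → k ≤ n → u k = U g1 h k (u 1)) {k : ℕ} (hk : 2 ≤ k)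
    (hkn : k ≤ n) :
    dU g1 h (k + 1) (u 1) = 2 * dU g1 h k (u 1) - dU g1 h (k - 1) (u 1) +
      h ^ 2 * deriv g1 (u k) * dU g1 h k (u 1) := by
  obtain ⟨k, rfl⟩ : ∃ m, k = m + 2 := ⟨k - 2, by omega⟩
  rw [hU (k + 2) (by omega) hkn]
  rfl

lemma IsSolution.lt_succ (hsol : IsSolution g1 g2 n h α u) (hh : 0 < h)
    (hg1 : ∀ x > 0, 0 < g1 x) : ∀ k, 1 ≤ k → k ≤ n - 1 → u k < u (k + 1) := by
  obtain ⟨hpos, h12, hrec, -⟩ := hsol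
  intro k hk hkn
  refine (pos_lt_succ_of_increments_mono u (hpos 1 le_rfl (by omega)) ?_ ?_ k hk hkn).2
  · nlinarith [hg1 _ (hpos 1 le_rfl (by omega)), pow_pos hh 2]
  · intro k hk hkm hxk
    nlinarith [hrec k hk hkm, hg1 _ hxk, pow_pos hh 2]

lemma IsSolution.dU_pos_lt_succ (hsol : IsSolution g1 g2 n h α u)
    (hU : ∀ k, 1 ≤ k → k ≤ n → u k = U g1 h k (u 1)) (hh : 0 < h)
    (hg1' : ∀ x > 0, 0 < deriv g1 x) :
    ∀ k, 1 ≤ k → k ≤ n - 1 → 0 < dU g1 h k (u 1) ∧ dU g1 h k (u 1) < dU g1 h (k + 1) (u 1) := by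
  intro k hk hkn
  refine pos_lt_succ_of_increments_mono (fun k => dU g1 h k (u 1)) one_pos ?_ ?_ k hk hkn
  · show 1 < 1 + h ^ 2 / 2 * deriv g1 (u 1)
    nlinarith [hg1' _ (hsol.1 1 le_rfl (by omega)), pow_pos hh 2]
  · intro k hk hkm hxk
    simp only [dU_succ_of_eq_U hU hk (by omega)]
    nlinarith [mul_pos (mul_pos (pow_pos hh 2) (hg1' _ (hsol.1 k (by omega) (by omega)))) hxk]

lemma IsSolution.dU_pos (hsol : IsSolution g1 g2 n h α u)
    (hU : ∀ k, 1 ≤ k → k ≤ n → u k = U g1 h k (u 1)) (hn : 2 ≤ n) (hh : 0 < h)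
    (hg1' : ∀ x > 0, 0 < deriv g1 x) : ∀ k, 1 ≤ k → k ≤ n → 0 < dU g1 h k (u 1) := by
  have hv := hsol.dU_pos_lt_succ hU hh hg1'
  intro k hk hkn
  obtain hkn | rfl := Nat.lt_or_eq_of_le hkn
  · exact (hv k hk (by omega)).1
  · have hlast := hv (k - 1) (by omega) le_rfl
    rw [Nat.sub_add_cancel (by omega)] at hlast
    exact hlast.1.trans hlast.2

lemma IsSolution.wronskian_lt (hsol : IsSolution g1 g2 n h α u)
    (hU : ∀ k, 1 ≤ k → k ≤ n → u k = U g1 h k (u 1)) (hh : 0 < h) (hg1 : Differentiable ℝ g1)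
    (hg1pos : ∀ x > 0, 0 < g1 x) (hg1' : ∀ x > 0, 0 < deriv g1 x)
    (hg1mono : StrictMonoOn (deriv g1) (Set.Ioi 0)) :
    ∀ k, 1 ≤ k → k ≤ n - 1 →
      (dU g1 h (k + 1) (u 1) - dU g1 h k (u 1)) * g1 (u (k + 1)) <
        deriv g1 (u (k + 1)) * dU g1 h (k + 1) (u 1) * (u (k + 1) - u k) := by
  have hv := hsol.dU_pos_lt_succ hU hh hg1'
  have hstep : ∀ k, 1 ≤ k → k ≤ n - 1 →
      (dU g1 h (k + 1) (u 1) - dU g1 h k (u 1)) * g1 (u k) ≤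
        deriv g1 (u k) * dU g1 h k (u 1) * (u (k + 1) - u k) →
      (dU g1 h (k + 1) (u 1) - dU g1 h k (u 1)) * g1 (u (k + 1)) <
        deriv g1 (u (k + 1)) * dU g1 h (k + 1) (u 1) * (u (k + 1) - u k) :=
    fun k hk hkn => wronskian_step hg1 hg1mono (hsol.1 k hk (by omega))
      (hsol.lt_succ hh hg1pos k hk hkn) (hv k hk hkn).1 (hv k hk hkn).2.le
  intro k hk
  refine fun hkn => hstep k hk hkn ?_
  induction k, hk using Nat.le_induction with
  | base =>
    rw [hsol.2.1]
    exact le_of_eq (by simp only [dU]; ring)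
  | succ k hk ih =>
    have hQ := hstep k hk (by omega) (ih (by omega))
    have hv' := dU_succ_of_eq_U hU (k := k + 1) (by omega) (by omega)
    have hu' := hsol.2.2.1 (k + 1) (by omega) (by omega)
    rw [Nat.add_sub_cancel] at hv' hu'
    rw [hv', show u (k + 1 + 1) = 2 * u (k + 1) - u k + h ^ 2 * g1 (u (k + 1)) by linarith]
    linarith

lemma IsSolution.boundary_continuant_neg (hsol : IsSolution g1 g2 n h α u)
    (hU : ∀ k, 1 ≤ k → k ≤ n → u k = U g1 h k (u 1)) (hn : 2 ≤ n) (hh : 0 < h) (hα : 0 < α)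
    (hg1 : Differentiable ℝ g1) (hg1pos : ∀ x > 0, 0 < g1 x) (hg1' : ∀ x > 0, 0 < deriv g1 x)
    (hg1mono : StrictMonoOn (deriv g1) (Set.Ioi 0)) (hg2 : 0 < g2 (u n))
    (hquot : deriv g1 (u n) * g2 (u n) ≤ g1 (u n) * deriv g2 (u n)) :
    (1 + h ^ 2 / 2 * deriv g1 (u n) - h * α * deriv g2 (u n)) * dU g1 h n (u 1) -
      dU g1 h (n - 1) (u 1) < 0 := by
  have hQ := hsol.wronskian_lt hU hh hg1 hg1pos hg1' hg1mono (n - 1) (by omega) le_rfl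
  obtain ⟨hvpos, hvlt⟩ := hsol.dU_pos_lt_succ hU hh hg1' (n - 1) (by omega) le_rfl
  rw [Nat.sub_add_cancel (by omega : 1 ≤ n)] at hQ hvlt
  have hg1n := hg1pos _ (hsol.1 n (by omega) le_rfl)
  have hid : ((1 + h ^ 2 / 2 * deriv g1 (u n) - h * α * deriv g2 (u n)) * dU g1 h n (u 1) -
      dU g1 h (n - 1) (u 1)) * (g1 (u n) * g2 (u n)) =
      g2 (u n) * ((dU g1 h n (u 1) - dU g1 h (n - 1) (u 1)) * g1 (u n) -
        deriv g1 (u n) * dU g1 h n (u 1) * (u n - u (n - 1))) +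
      h * α * dU g1 h n (u 1) * g2 (u n) *
        (deriv g1 (u n) * g2 (u n) - g1 (u n) * deriv g2 (u n)) := by
    linear_combination (deriv g1 (u n) * dU g1 h n (u 1) * g2 (u n)) * hsol.2.2.2
  have key : ((1 + h ^ 2 / 2 * deriv g1 (u n) - h * α * deriv g2 (u n)) * dU g1 h n (u 1) -
      dU g1 h (n - 1) (u 1)) * (g1 (u n) * g2 (u n)) < 0 := by
    rw [hid]
    have hcoef : 0 < h * α * dU g1 h n (u 1) * g2 (u n) :=
      mul_pos (mul_pos (mul_pos hh hα) (hvpos.trans hvlt)) hg2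
    linarith [mul_neg_of_pos_of_neg hg2 (sub_neg.2 hQ),
      mul_nonpos_of_nonneg_of_nonpos hcoef.le (sub_nonpos.2 hquot)]
  exact neg_of_mul_neg_left key (mul_pos hg1n hg2).le

end DiscreteSystem

section Jacobian

variable {g1 g2 : ℝ → ℝ} {n : ℕ} {h α : ℝ} {u : ℕ → ℝ}

noncomputable def jacDiag (g1 g2 : ℝ → ℝ) (n : ℕ) (h α : ℝ) (u : ℕ → ℝ) (k : ℕ) : ℝ :=
  if k = 1 then 1 + h ^ 2 / 2 * deriv g1 (u 1)
  else if k = n then 1 + h ^ 2 / 2 * deriv g1 (u n) - h * α * deriv g2 (u n)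
  else 2 + h ^ 2 * deriv g1 (u k)

lemma Jac_eq_tridiag : Jac g1 g2 n h α u = tridiag (jacDiag g1 g2 n h α u) n := by
  ext i j
  simp only [Jac, tridiag, jacDiag, Matrix.of_apply]
  split_ifs <;> first | rfl | omega

lemma jacDiag_mul_dU (hU : ∀ k, 1 ≤ k → k ≤ n → u k = U g1 h k (u 1)) :
    ∀ k, 1 ≤ k → k < n →
      jacDiag g1 g2 n h α u k * dU g1 h k (u 1) =
        dU g1 h (k - 1) (u 1) + dU g1 h (k + 1) (u 1) := by
  intro k hk hkn
  obtain rfl | hk2 := hk.eq_or_lt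
  · simp [jacDiag, dU]
  · rw [jacDiag, if_neg hk2.ne', if_neg hkn.ne, dU_succ_of_eq_U hU hk2 hkn.le]
    ring

end Jacobian

theorem stmt17_general
    (g1 g2 : ℝ → ℝ)
    (hg1C : ContDiff ℝ 3 g1) (hg2C : ContDiff ℝ 3 g2)
    (hg10 : g1 0 = 0) (hg20 : g2 0 = 0)
    (hg1d1 : ∀ x > 0, 0 < deriv g1 x) (hg2d1 : ∀ x > 0, 0 < deriv g2 x)
    (hg1d2 : ∀ x > 0, 0 < iteratedDeriv 2 g1 x)
    (n : ℕ) (hn : 2 ≤ n) (h : ℝ) (hh : h = 1 / ((n : ℝ) - 1))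
    (α : ℝ) (hα : 0 < α) (u : ℕ → ℝ)
    (hsol : IsSolution g1 g2 n h α u)
    (hU : ∀ k, 1 ≤ k → k ≤ n → u k = U g1 h k (u 1))
    (hdec : StrictAntiOn (fun x => g1 x / g2 x) (Set.Ioi 0)) :
    IsUnit (Jac g1 g2 n h α u) ∧
    ∀ i j : Fin n,
      (Jac g1 g2 n h α u)⁻¹ i j =
        (∑ k ∈ Finset.Icc (max ((i : ℕ) + 1) ((j : ℕ) + 1)) (n - 1),
          deriv (U g1 h ((i : ℕ) + 1)) (u 1) * deriv (U g1 h ((j : ℕ) + 1)) (u 1) /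
            (deriv (U g1 h k) (u 1) * deriv (U g1 h (k + 1)) (u 1))) +
        deriv (U g1 h ((i : ℕ) + 1)) (u 1) * deriv (U g1 h ((j : ℕ) + 1)) (u 1) /
          (deriv (U g1 h n) (u 1) * (Jac g1 g2 n h α u).det) := by
  have hh0 : 0 < h := by
    have : (2 : ℝ) ≤ n := by exact_mod_cast hn
    rw [hh]
    exact one_div_pos.2 (by linarith)
  have hg1 : Differentiable ℝ g1 := hg1C.differentiable (by norm_num)
  have hg2 : Differentiable ℝ g2 := hg2C.differentiable (by norm_num)
  have hun : 0 < u n := hsol.1 n (by omega) le_rfl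
  have hg2n : 0 < g2 (u n) := pos_of_deriv_pos hg2 hg20 hg2d1 hun
  have hd := hsol.boundary_continuant_neg hU hn hh0 hα hg1
    (fun x => pos_of_deriv_pos hg1 hg10 hg1d1) hg1d1
    (strictMonoOn_deriv_of_iteratedDeriv_two_pos (hg1C.of_le (by norm_num)) hg1d2) hg2n
    (deriv_mul_le_mul_deriv_of_antitoneOn_div isOpen_Ioi hdec.antitoneOn hun (hg1 _) (hg2 _)
      hg2n.ne')
  have hv := hsol.dU_pos hU hn hh0 hg1d1
  have hdet : (tridiag (jacDiag g1 g2 n h α u) n).det ≠ 0 := by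
    rw [det_tridiag _ _ (by omega) rfl rfl (fun k hk hkn => (hv k (by omega) hkn).ne')
      (jacDiag_mul_dU hU), jacDiag, if_neg (by omega), if_pos rfl]
    exact hd.ne
  have hderiv : ∀ k, 1 ≤ k → deriv (U g1 h k) (u 1) = dU g1 h k (u 1) :=
    fun k hk => (hasDerivAt_U hg1 h (u 1) hk).deriv
  rw [Jac_eq_tridiag]
  refine ⟨(Matrix.isUnit_iff_isUnit_det _).2 hdet.isUnit, fun i j => ?_⟩
  rw [inv_tridiag _ _ (by omega) rfl rfl (fun k hk hkn => (hv k hk hkn).ne') (jacDiag_mul_dU hU)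
    hdet]
  simp only [green, Matrix.of_apply, mul_add, mul_sum, mul_one_div,
    hderiv _ (Nat.le_add_left 1 _), hderiv n (by omega)]
  congr 1
  refine sum_congr rfl fun k hk => ?_
  rw [hderiv k (by rw [mem_Icc] at hk; omega)]

theorem stmt17
    (g1 g2 : ℝ → ℝ)
    (hg1C : ContDiff ℝ 3 g1) (hg2C : ContDiff ℝ 3 g2)
    (hg1A : AnalyticAt ℝ g1 0) (hg2A : AnalyticAt ℝ g2 0)
    (hg10 : g1 0 = 0) (hg20 : g2 0 = 0)
    (hg1d1 : ∀ x > 0, 0 < deriv g1 x) (hg2d1 : ∀ x > 0, 0 < deriv g2 x)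
    (hg1d2 : ∀ x > 0, 0 < iteratedDeriv 2 g1 x) (hg2d2 : ∀ x > 0, 0 < iteratedDeriv 2 g2 x)
    (hg1d3 : ∀ x > 0, 0 ≤ iteratedDeriv 3 g1 x) (hg2d3 : ∀ x > 0, 0 ≤ iteratedDeriv 3 g2 x)
    (n : ℕ) (hn : 2 ≤ n) (h : ℝ) (hh : h = 1 / ((n : ℝ) - 1))
    (α : ℝ) (hα : 0 < α) (u : ℕ → ℝ)
    (hsol : IsSolution g1 g2 n h α u)
    (hU : ∀ k, 1 ≤ k → k ≤ n → u k = U g1 h k (u 1))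
    (hdec : StrictAntiOn (fun x => g1 x / g2 x) (Set.Ioi 0)) :
    IsUnit (Jac g1 g2 n h α u) ∧
    ∀ i j : Fin n,
      (Jac g1 g2 n h α u)⁻¹ i j =
        (∑ k ∈ Finset.Icc (max ((i : ℕ) + 1) ((j : ℕ) + 1)) (n - 1),
          deriv (U g1 h ((i : ℕ) + 1)) (u 1) * deriv (U g1 h ((j : ℕ) + 1)) (u 1) /
            (deriv (U g1 h k) (u 1) * deriv (U g1 h (k + 1)) (u 1))) +
        deriv (U g1 h ((i : ℕ) + 1)) (u 1) * deriv (U g1 h ((j : ℕ) + 1)) (u 1) /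
          (deriv (U g1 h n) (u 1) * (Jac g1 g2 n h α u).det) :=
  stmt17_general g1 g2 hg1C hg2C hg10 hg20 hg1d1 hg2d1 hg1d2 n hn h hh α hα u hsol hU hdec
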